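/- Let p, q : Fin m → (Fin 3 → ℝ) be tuples of points in ℝ³ such that the linear span of the points p i is a proper subspace of ℝ³. If there exists an orthogonal matrix A : Matrix (Fin 3) (Fin 3) ℝ (Aᵀ * A = 1) with A.mulVec (p i) = q i for all i, then there also exists a special orthogonal matrix R (Rᵀ * R = 1 and det R = 1) with R.mulVec (p i) = q i for all i. -/

import Mathlib

/-!
An orthogonal matrix has determinant `±1`. If it is `-1`, compose it with the Householder
reflection in a hyperplane containing all the `p i`: the reflection is orthogonal, fixes every
`p i`, and has determinant `-1`.
-/

open Matrix

namespace Matrix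

variable {n 𝕜 : Type*} [Fintype n] [DecidableEq n]

section Field

variable [Field 𝕜]

def householder (w : n → 𝕜) : Matrix n n 𝕜 :=
  1 - (2 / (w ⬝ᵥ w)) • vecMulVec w w

theorem transpose_householder (w : n → 𝕜) : (householder w)ᵀ = householder w := by
  simp [householder, transpose_vecMulVec]

theorem householder_mulVec_of_dotProduct_eq_zero {w x : n → 𝕜} (h : w ⬝ᵥ x = 0) :
    householder w *ᵥ x = x := by
  simp [householder, sub_mulVec, smul_mulVec, vecMulVec_mulVec, h]

theorem householder_mul_self {w : n → 𝕜} (hw : w ⬝ᵥ w ≠ 0) :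
    householder w * householder w = 1 := by
  have key : 2 / (w ⬝ᵥ w) * (2 / (w ⬝ᵥ w)) * (w ⬝ᵥ w) = 2 / (w ⬝ᵥ w) + 2 / (w ⬝ᵥ w) := by
    field_simp; ring
  simp only [householder, sub_mul, mul_sub, one_mul, mul_one, smul_mul_smul,
    vecMulVec_mul_vecMulVec, vecMulVec_smul, smul_smul, key, add_smul]
  abel

theorem det_householder {w : n → 𝕜} (hw : w ⬝ᵥ w ≠ 0) : (householder w).det = -1 := by
  rw [householder, sub_eq_add_neg, ← neg_smul, ← smul_vecMulVec, vecMulVec_eq Unit,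
    det_one_add_replicateCol_mul_replicateRow, dotProduct_smul, smul_eq_mul]
  field_simp
  ring

theorem exists_ne_zero_forall_dotProduct_eq_zero {S : Submodule 𝕜 (n → 𝕜)} (hS : S ≠ ⊤) :
    ∃ w ≠ 0, ∀ x ∈ S, w ⬝ᵥ x = 0 := by
  obtain ⟨f, hf, hfS⟩ := Submodule.exists_dual_map_eq_bot_of_lt_top hS.lt_top inferInstance
  let e := LinearEquiv.piRing 𝕜 𝕜 n 𝕜
  have hfe (x : n → 𝕜) : f x = e f ⬝ᵥ x := by
    conv_lhs => rw [← e.symm_apply_apply f, LinearEquiv.piRing_symm_apply]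
    simp only [e, dotProduct, smul_eq_mul, mul_comm]
  refine ⟨e f, (e.map_ne_zero_iff).mpr hf, fun x hx => ?_⟩
  rw [← hfe, ← Submodule.mem_bot 𝕜, ← hfS]
  exact Submodule.mem_map_of_mem hx

end Field

theorem det_eq_one_or_neg_one_of_transpose_mul_self [CommRing 𝕜] [NoZeroDivisors 𝕜]
    {A : Matrix n n 𝕜} (hA : Aᵀ * A = 1) : A.det = 1 ∨ A.det = -1 := by
  apply mul_self_eq_one_iff.mp
  simpa [det_transpose] using congrArg det hA

theorem exists_det_eq_one_of_transpose_mul_self_of_span_ne_top [Field 𝕜] [LinearOrder 𝕜]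
    [IsStrictOrderedRing 𝕜] {ι : Type*} {p q : ι → n → 𝕜}
    (hspan : Submodule.span 𝕜 (Set.range p) ≠ ⊤) {A : Matrix n n 𝕜} (hA : Aᵀ * A = 1)
    (hAp : ∀ i, A *ᵥ p i = q i) :
    ∃ R : Matrix n n 𝕜, Rᵀ * R = 1 ∧ R.det = 1 ∧ ∀ i, R *ᵥ p i = q i := by
  rcases det_eq_one_or_neg_one_of_transpose_mul_self hA with hdet | hdet
  · exact ⟨A, hA, hdet, hAp⟩
  obtain ⟨w, hw, hwp⟩ := exists_ne_zero_forall_dotProduct_eq_zero hspan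
  have hww : w ⬝ᵥ w ≠ 0 := dotProduct_self_eq_zero.not.mpr hw
  refine ⟨A * householder w, ?_, ?_, fun i => ?_⟩
  · rw [transpose_mul, transpose_householder, Matrix.mul_assoc, ← Matrix.mul_assoc Aᵀ, hA,
      Matrix.one_mul, householder_mul_self hww]
  · rw [det_mul, hdet, det_householder hww, neg_mul_neg, one_mul]
  · rw [← mulVec_mulVec, householder_mulVec_of_dotProduct_eq_zero
      (hwp _ (Submodule.subset_span ⟨i, rfl⟩)), hAp]

end Matrix

/-- If the points `p i` span a proper subspace of `ℝ³` and an orthogonal matrix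
maps `p` to `q`, then a special orthogonal matrix can also be chosen. -/
theorem exists_specialOrthogonal_of_orthogonal_of_span_ne_top {m : ℕ}
    (p q : Fin m → (Fin 3 → ℝ))
    (hspan : Submodule.span ℝ (Set.range p) ≠ ⊤)
    (h : ∃ A : Matrix (Fin 3) (Fin 3) ℝ, Aᵀ * A = 1 ∧ ∀ i, A.mulVec (p i) = q i) :
    ∃ R : Matrix (Fin 3) (Fin 3) ℝ, Rᵀ * R = 1 ∧ R.det = 1 ∧
      ∀ i, R.mulVec (p i) = q i := by
  obtain ⟨A, hA, hAp⟩ := h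
  exact exists_det_eq_one_of_transpose_mul_self_of_span_ne_top hspan hA hAp
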